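/- The binomials y_{i,1} − x_{1,n}x_{i,1} and y_{i,n} − x_{1,n}x_{i,n} (for i ∈ J) and x_1 x_n − x_{1,n}⁴ are indispensable binomials of I_{D_{2m+1}}: for every set B of binomials (differences of two monomials of R) whose generated ideal equals I_{D_{2m+1}}, B contains each of these binomials or its negative. -/

import Mathlib

/-!
Write `deg d` for the exponent vector of `π(x^d)`, so that `x^d - x^e ∈ I_{D_{2m+1}}` iff
`deg d = deg e`. If `x^u - x^v` lies in the ideal generated by a set `B` of binomials, then `x^u`
is divisible by a term of some element of `B`. Hence `x^u - x^v` is indispensable as soon as the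
fibres of `deg` through exponents `e ≤ u` are singletons, except the fibre of `u` itself, which
is `{u, v}`.

For the three binomials this is a small computation: a variable occurring in `x^d` has a
`π`-image dividing `π(x^d)`, and only `x_{1,n}, x_{i,1}, y_{i,1}` (resp. `x_{1,n}, x_{i,n},
y_{i,n}`, resp. `x_1, x_n, x_{1,n}`) have images dividing `u_i u_1³ u_n` (resp. `u_i u_1 u_n³`,
resp. `u_1⁴ u_n⁴`). Comparing the exponents of `u_1`, `u_n` and `u_i` leaves only the expected
solutions.
-/

open MvPolynomial

/-- Index type for the variables of the polynomial ring `R` in the `D_{2m+1}` case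
(`n = 2m+1`).  The set `J = {2,4,…,n-1}` of even integers is realised as
`{2t+2 | t : Fin m}` and `J^c = {3,5,…,n-2}` as `{2t+3 | t : Fin (m-1)}`.  The constructors:
`x1 ↦ x_1`, `xn ↦ x_n`, `xJ t ↦ x_{2t+2}` (`2t+2 ∈ J`), `xJc t ↦ x_{2t+3}` (`2t+3 ∈ J^c`),
`xP s t _ ↦ x_{2s+2,2t+2}` (a pair `k < ℓ` in `J`), `x1n ↦ x_{1,n}`,
`xK1 t ↦ x_{2t+2,1}`, `xKn t ↦ x_{2t+2,n}`, `yK1 t ↦ y_{2t+2,1}`, `yKn t ↦ y_{2t+2,n}`. -/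
inductive DoVar (m : ℕ) : Type where
  | x1 : DoVar m
  | xn : DoVar m
  | xJ : Fin m → DoVar m
  | xJc : Fin (m - 1) → DoVar m
  | xP : (s t : Fin m) → s < t → DoVar m
  | x1n : DoVar m
  | xK1 : Fin m → DoVar m
  | xKn : Fin m → DoVar m
  | yK1 : Fin m → DoVar m
  | yKn : Fin m → DoVar m

/-- The images of the variables under `π`, where `u_i = X i` inside
`K[u_1,…,u_n] ⊆ MvPolynomial ℕ K` and `n = 2m+1`:
`π(x_i) = u_i²` (`i ∈ J`), `π(x_j) = u_j` (`j ∈ J^c`), `π(x_1) = u_1⁴`, `π(x_n) = u_n⁴`,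
`π(x_{k,ℓ}) = u_k u_ℓ` (`k < ℓ` in `J`), `π(x_{1,n}) = u_1 u_n`, `π(x_{i,1}) = u_i u_1²`,
`π(x_{i,n}) = u_i u_n²`, `π(y_{i,1}) = u_i u_1³ u_n`, `π(y_{i,n}) = u_i u_1 u_n³`. -/
noncomputable def doImage (K : Type*) [Field K] (m : ℕ) : DoVar m → MvPolynomial ℕ K
  | .x1 => X 1 ^ 4
  | .xn => X (2 * m + 1) ^ 4
  | .xJ t => X (2 * t.val + 2) ^ 2
  | .xJc t => X (2 * t.val + 3)
  | .xP s t _ => X (2 * s.val + 2) * X (2 * t.val + 2)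
  | .x1n => X 1 * X (2 * m + 1)
  | .xK1 t => X (2 * t.val + 2) * X 1 ^ 2
  | .xKn t => X (2 * t.val + 2) * X (2 * m + 1) ^ 2
  | .yK1 t => X (2 * t.val + 2) * X 1 ^ 3 * X (2 * m + 1)
  | .yKn t => X (2 * t.val + 2) * X 1 * X (2 * m + 1) ^ 3

/-- The toric map `π : R → K[u_1,…,u_n]` for the `D_{2m+1}` configuration. -/
noncomputable def piDo (K : Type*) [Field K] (m : ℕ) :
    MvPolynomial (DoVar m) K →ₐ[K] MvPolynomial ℕ K :=
  aeval (doImage K m)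

/-- The set `𝒢_{D_{2m+1}}` of binomials. -/
noncomputable def GDo (K : Type*) [Field K] (m : ℕ) : Set (MvPolynomial (DoVar m) K) :=
  {g | (∃ (i j k l : Fin m) (hij : i < j) (hjk : j < k) (hkl : k < l),
          g = X (DoVar.xP i k (hij.trans hjk)) * X (DoVar.xP j l (hjk.trans hkl))
              - X (DoVar.xP i j hij) * X (DoVar.xP k l hkl) ∨
          g = X (DoVar.xP i l (hij.trans (hjk.trans hkl))) * X (DoVar.xP j k hjk)
              - X (DoVar.xP i j hij) * X (DoVar.xP k l hkl)) ∨
      (∃ (i j k : Fin m) (hij : i < j) (hjk : j < k),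
          g = X (DoVar.xP j k hjk) * X (DoVar.xK1 i)
              - X (DoVar.xP i j hij) * X (DoVar.xK1 k) ∨
          g = X (DoVar.xP i k (hij.trans hjk)) * X (DoVar.xK1 j)
              - X (DoVar.xP i j hij) * X (DoVar.xK1 k) ∨
          g = X (DoVar.xP j k hjk) * X (DoVar.xKn i)
              - X (DoVar.xP i j hij) * X (DoVar.xKn k) ∨
          g = X (DoVar.xP i k (hij.trans hjk)) * X (DoVar.xKn j)
              - X (DoVar.xP i j hij) * X (DoVar.xKn k) ∨
          g = X (DoVar.xJ j) * X (DoVar.xP i k (hij.trans hjk))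
              - X (DoVar.xP i j hij) * X (DoVar.xP j k hjk) ∨
          g = X (DoVar.xP i j hij) * X (DoVar.xP i k (hij.trans hjk))
              - X (DoVar.xJ i) * X (DoVar.xP j k hjk) ∨
          g = X (DoVar.xJ k) * X (DoVar.xP i j hij)
              - X (DoVar.xP i k (hij.trans hjk)) * X (DoVar.xP j k hjk)) ∨
      (∃ (i j : Fin m) (hij : i < j),
          g = X (DoVar.xJ i) * X (DoVar.xJ j) - X (DoVar.xP i j hij) ^ 2 ∨
          g = X (DoVar.xP i j hij) * X DoVar.x1 - X (DoVar.xK1 i) * X (DoVar.xK1 j) ∨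
          g = X (DoVar.xP i j hij) * X DoVar.xn - X (DoVar.xKn i) * X (DoVar.xKn j) ∨
          g = X (DoVar.xP i j hij) * X (DoVar.xK1 i) - X (DoVar.xJ i) * X (DoVar.xK1 j) ∨
          g = X (DoVar.xP i j hij) * X (DoVar.xKn i) - X (DoVar.xJ i) * X (DoVar.xKn j) ∨
          g = X (DoVar.xJ j) * X (DoVar.xK1 i) - X (DoVar.xP i j hij) * X (DoVar.xK1 j) ∨
          g = X (DoVar.xJ j) * X (DoVar.xKn i) - X (DoVar.xP i j hij) * X (DoVar.xKn j) ∨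
          g = X (DoVar.xK1 j) * X (DoVar.xKn i) - X (DoVar.xK1 i) * X (DoVar.xKn j) ∨
          g = X (DoVar.xK1 i) * X (DoVar.xKn j) - X DoVar.x1n ^ 2 * X (DoVar.xP i j hij)) ∨
      (∃ i : Fin m,
          g = X (DoVar.xJ i) * X DoVar.x1 - X (DoVar.xK1 i) ^ 2 ∨
          g = X (DoVar.xJ i) * X DoVar.xn - X (DoVar.xKn i) ^ 2 ∨
          g = X (DoVar.xK1 i) * X (DoVar.xKn i) - X DoVar.x1n ^ 2 * X (DoVar.xJ i) ∨
          g = X (DoVar.xKn i) * X DoVar.x1 - X DoVar.x1n ^ 2 * X (DoVar.xK1 i) ∨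
          g = X (DoVar.yK1 i) - X DoVar.x1n * X (DoVar.xK1 i) ∨
          g = X (DoVar.yKn i) - X DoVar.x1n * X (DoVar.xKn i) ∨
          g = X (DoVar.xK1 i) * X DoVar.xn - X DoVar.x1n ^ 2 * X (DoVar.xKn i)) ∨
      g = X DoVar.x1 * X DoVar.xn - X DoVar.x1n ^ 4}

namespace MvPolynomial

variable {σ τ R : Type*}

theorem exists_support_le_of_mem_span [CommSemiring R] {B : Set (MvPolynomial σ R)}
    {f : MvPolynomial σ R} (hf : f ∈ Ideal.span B) {u : σ →₀ ℕ} (hu : coeff u f ≠ 0) :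
    ∃ b ∈ B, ∃ e ∈ b.support, e ≤ u := by
  classical
  induction hf using Submodule.span_induction generalizing u with
  | mem b hb => exact ⟨b, hb, u, mem_support_iff.mpr hu, le_rfl⟩
  | zero => simp at hu
  | add f g _ _ hf hg =>
    rw [coeff_add] at hu
    by_cases h : coeff u f = 0
    · exact hg (by simpa [h] using hu)
    · exact hf h
  | smul c f _ hf =>
    obtain ⟨a, -, e', he', rfl⟩ := Finset.mem_add.mp (support_mul c f (mem_support_iff.mpr hu))
    obtain ⟨b, hb, e, he, hle⟩ := hf (mem_support_iff.mp he')
    exact ⟨b, hb, e, he, hle.trans le_add_self⟩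

theorem aeval_monomial_monomial [CommSemiring R] (A : σ → τ →₀ ℕ) (d : σ →₀ ℕ) :
    aeval (fun w => monomial (A w) (1 : R)) (monomial d (1 : R)) =
      monomial (Finsupp.linearCombination ℕ A d) 1 := by
  rw [aeval_monomial, Finsupp.linearCombination_apply, monomial_finsupp_sum_index]
  simp [monomial_pow]

theorem monomial_sub_monomial_mem_ker_aeval_iff [CommRing R] [Nontrivial R]
    {A : σ → τ →₀ ℕ} {d e : σ →₀ ℕ} :
    monomial d (1 : R) - monomial e 1 ∈ RingHom.ker (aeval fun w => monomial (A w) (1 : R)) ↔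
      Finsupp.linearCombination ℕ A d = Finsupp.linearCombination ℕ A e := by
  rw [RingHom.mem_ker, map_sub, sub_eq_zero, aeval_monomial_monomial, aeval_monomial_monomial]
  exact (monomial_left_injective one_ne_zero).eq_iff

section Binomial

variable [CommRing R]

def IsBinomialGenerating (B : Set (MvPolynomial σ R)) (I : Ideal (MvPolynomial σ R)) : Prop :=
  (∀ b ∈ B, ∃ d e : σ →₀ ℕ, d ≠ e ∧ b = monomial d (1 : R) - monomial e 1) ∧ Ideal.span B = I

def IsIndispensable (I : Ideal (MvPolynomial σ R)) (f : MvPolynomial σ R) : Prop :=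
  ∀ B, IsBinomialGenerating B I → f ∈ B ∨ -f ∈ B

theorem isIndispensable_of_fibers [Nontrivial R] {A : σ → τ →₀ ℕ} {u v : σ →₀ ℕ} (huv : u ≠ v)
    (hdeg : Finsupp.linearCombination ℕ A u = Finsupp.linearCombination ℕ A v)
    (hfiber : ∀ d e, e ≤ u → Finsupp.linearCombination ℕ A d = Finsupp.linearCombination ℕ A e →
      d = e ∨ e = u ∧ d = v) :
    IsIndispensable (RingHom.ker (aeval fun w => monomial (A w) (1 : R)))
      (monomial u (1 : R) - monomial v 1) := by
  classical
  rintro B ⟨hbin, hspan⟩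
  have hf : monomial u (1 : R) - monomial v 1 ∈ Ideal.span B := by
    rw [hspan]; exact monomial_sub_monomial_mem_ker_aeval_iff.mpr hdeg
  have hu : coeff u (monomial u (1 : R) - monomial v 1) ≠ 0 := by
    simp [coeff_monomial, huv.symm]
  obtain ⟨b, hb, e', he', hle⟩ := exists_support_le_of_mem_span hf hu
  obtain ⟨d, e, hde, rfl⟩ := hbin b hb
  have hker : Finsupp.linearCombination ℕ A d = Finsupp.linearCombination ℕ A e :=
    monomial_sub_monomial_mem_ker_aeval_iff.mp (hspan ▸ Ideal.subset_span hb)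
  have he'de : e' = d ∨ e' = e := by
    simpa [support_monomial] using support_sub σ _ _ he'
  rcases he'de with rfl | rfl
  · rcases hfiber e e' hle hker.symm with h | ⟨rfl, rfl⟩
    · exact absurd h.symm hde
    · exact Or.inl hb
  · rcases hfiber d e' hle hker with h | ⟨rfl, rfl⟩
    · exact absurd h hde
    · rw [neg_sub]; exact Or.inr hb

end Binomial

end MvPolynomial

namespace Finsupp

variable {σ M : Type*} [AddCommMonoid M] [PartialOrder M] [CanonicallyOrderedAdd M]

theorem le_linearCombination_of_mem_support [IsOrderedAddMonoid M] (A : σ → M) {d : σ →₀ ℕ}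
    {w : σ} (hw : w ∈ d.support) : A w ≤ linearCombination ℕ A d := by
  rw [linearCombination_apply, Finsupp.sum]
  exact (le_self_nsmul zero_le (mem_support_iff.mp hw)).trans
    (Finset.single_le_sum (f := fun w => d w • A w) (fun _ _ => zero_le) hw)

theorem linearCombination_mono (A : σ → M) {d e : σ →₀ ℕ} (h : d ≤ e) :
    linearCombination ℕ A d ≤ linearCombination ℕ A e := by
  obtain ⟨f, rfl⟩ := exists_add_of_le h
  rw [map_add]
  exact le_self_add

theorem support_subset_of_linearCombination_le [IsOrderedAddMonoid M] {A : σ → M} {S : Finset σ}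
    {t : M} (hS : ∀ w, A w ≤ t → w ∈ S) {d : σ →₀ ℕ} (hd : linearCombination ℕ A d ≤ t) :
    d.support ⊆ S :=
  fun _ hw => hS _ ((le_linearCombination_of_mem_support A hw).trans hd)

theorem eq_sum_single_of_support_subset {N : Type*} [AddCommMonoid N] {f : σ →₀ N}
    {S : Finset σ} (h : f.support ⊆ S) : f = ∑ w ∈ S, single w (f w) := by
  conv_lhs => rw [← sum_single f]
  exact sum_of_support_subset f h _ fun _ _ => single_zero _

end Finsupp

noncomputable def doExponent (m : ℕ) : DoVar m → (ℕ →₀ ℕ)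
  | .x1 => .single 1 4
  | .xn => .single (2 * m + 1) 4
  | .xJ t => .single (2 * t.val + 2) 2
  | .xJc t => .single (2 * t.val + 3) 1
  | .xP s t _ => .single (2 * s.val + 2) 1 + .single (2 * t.val + 2) 1
  | .x1n => .single 1 1 + .single (2 * m + 1) 1
  | .xK1 t => .single (2 * t.val + 2) 1 + .single 1 2
  | .xKn t => .single (2 * t.val + 2) 1 + .single (2 * m + 1) 2
  | .yK1 t => .single (2 * t.val + 2) 1 + .single 1 3 + .single (2 * m + 1) 1
  | .yKn t => .single (2 * t.val + 2) 1 + .single 1 1 + .single (2 * m + 1) 3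

theorem piDo_eq_aeval (K : Type*) [Field K] (m : ℕ) :
    piDo K m = aeval fun w => monomial (doExponent m w) (1 : K) := by
  refine congrArg aeval (funext fun w => ?_)
  cases w <;> simp [doImage, doExponent, X, monomial_pow, monomial_mul, Finsupp.smul_single]

theorem doExponent_le_yK1 {m : ℕ} {i : Fin m} {w : DoVar m}
    (h : doExponent m w ≤ doExponent m (.yK1 i)) :
    w = .x1n ∨ w = .xK1 i ∨ w = .yK1 i := by
  have key : ∀ k, doExponent m w k ≤ doExponent m (.yK1 i) k := h
  have hi : (i : ℕ) < m := i.isLt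
  cases w with
  | x1n => exact Or.inl rfl
  | x1 =>
    have hk := key 1
    simp [doExponent, Finsupp.single_apply] at hk ⊢
    split_ifs at hk <;> omega
  | xn =>
    have hk := key (2 * m + 1)
    simp [doExponent, Finsupp.single_apply] at hk ⊢
    split_ifs at hk <;> omega
  | xJ t | xK1 t | yK1 t =>
    have hk := key (2 * t + 2)
    simp [doExponent, Finsupp.single_apply, Fin.ext_iff] at hk ⊢
    split_ifs at hk <;> omega
  | xJc t =>
    have hk := key (2 * t + 3)
    simp [doExponent, Finsupp.single_apply] at hk ⊢
    split_ifs at hk <;> omega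
  | xP s t hst =>
    have hs := key (2 * s + 2)
    have ht := key (2 * t + 2)
    have : s.val < t := hst
    simp [doExponent, Finsupp.single_apply] at hs ht ⊢
    split_ifs at hs ht <;> omega
  | xKn t | yKn t =>
    have hk := key (2 * m + 1)
    simp [doExponent, Finsupp.single_apply] at hk ⊢
    split_ifs at hk <;> omega

theorem doExponent_le_yKn {m : ℕ} {i : Fin m} {w : DoVar m}
    (h : doExponent m w ≤ doExponent m (.yKn i)) :
    w = .x1n ∨ w = .xKn i ∨ w = .yKn i := by
  have key : ∀ k, doExponent m w k ≤ doExponent m (.yKn i) k := h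
  have hi : (i : ℕ) < m := i.isLt
  cases w with
  | x1n => exact Or.inl rfl
  | x1 =>
    have hk := key 1
    simp [doExponent, Finsupp.single_apply] at hk ⊢
    split_ifs at hk <;> omega
  | xn =>
    have hk := key (2 * m + 1)
    simp [doExponent, Finsupp.single_apply] at hk ⊢
    split_ifs at hk <;> omega
  | xJ t | xKn t | yKn t =>
    have hk := key (2 * t + 2)
    simp [doExponent, Finsupp.single_apply, Fin.ext_iff] at hk ⊢
    split_ifs at hk <;> omega
  | xJc t =>
    have hk := key (2 * t + 3)
    simp [doExponent, Finsupp.single_apply] at hk ⊢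
    split_ifs at hk <;> omega
  | xP s t hst =>
    have hs := key (2 * s + 2)
    have ht := key (2 * t + 2)
    have : s.val < t := hst
    simp [doExponent, Finsupp.single_apply] at hs ht ⊢
    split_ifs at hs ht <;> omega
  | xK1 t | yK1 t =>
    have hk := key 1
    simp [doExponent, Finsupp.single_apply] at hk ⊢
    split_ifs at hk <;> omega

theorem doExponent_le_x1_add_xn {m : ℕ} {w : DoVar m}
    (h : doExponent m w ≤ doExponent m .x1 + doExponent m .xn) :
    w = .x1 ∨ w = .xn ∨ w = .x1n := by
  have key : ∀ k, doExponent m w k ≤ (doExponent m .x1 + doExponent m .xn) k := h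
  cases w with
  | x1 => exact Or.inl rfl
  | xn => exact Or.inr (Or.inl rfl)
  | x1n => exact Or.inr (Or.inr rfl)
  | xJ t | xP t _ _ | xK1 t | xKn t | yK1 t | yKn t =>
    have hk := key (2 * t + 2)
    simp [doExponent, Finsupp.single_apply] at hk ⊢
    split_ifs at hk <;> omega
  | xJc t =>
    have hk := key (2 * t + 3)
    simp [doExponent, Finsupp.single_apply] at hk ⊢
    split_ifs at hk <;> omega

theorem doFiber_below_yK1 {m : ℕ} {i : Fin m} {d e : DoVar m →₀ ℕ}
    (he : e ≤ .single (.yK1 i) 1)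
    (hde : Finsupp.linearCombination ℕ (doExponent m) d =
      Finsupp.linearCombination ℕ (doExponent m) e) :
    d = e ∨ e = .single (.yK1 i) 1 ∧ d = .single .x1n 1 + .single (.xK1 i) 1 := by
  classical
  have hd : d.support ⊆ {.x1n, .xK1 i, .yK1 i} := by
    refine Finsupp.support_subset_of_linearCombination_le
      (fun w hw => by simpa using doExponent_le_yK1 hw) ?_
    simpa [hde] using Finsupp.linearCombination_mono (doExponent m) he
  obtain ⟨k, rfl⟩ := Finsupp.support_subset_singleton'.mp
    ((Finsupp.support_mono he).trans Finsupp.support_single_subset)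
  have hk : k ≤ 1 := by simpa using he (.yK1 i)
  rw [Finsupp.eq_sum_single_of_support_subset hd] at hde ⊢
  simp only [Finset.sum_insert, map_add, Finsupp.linearCombination_single, Finset.mem_insert,
    Finset.mem_singleton, Finset.sum_singleton, reduceCtorEq, or_self, not_false_eq_true] at hde ⊢
  generalize d .x1n = a, d (.xK1 i) = b, d (.yK1 i) = c at hde ⊢
  obtain ⟨rfl, rfl, rfl⟩ | ⟨rfl, rfl, rfl, rfl⟩ :
      a = 0 ∧ b = 0 ∧ c = k ∨ k = 1 ∧ a = 1 ∧ b = 1 ∧ c = 0 := by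
    have hi : (i : ℕ) < m := i.isLt
    have h1 := congr($hde 1)
    have hn := congr($hde (2 * m + 1))
    have hJ := congr($hde (2 * i + 2))
    simp [doExponent, Finsupp.single_apply] at h1 hn hJ
    split_ifs at h1 hn hJ <;> omega
  all_goals simp

theorem doFiber_below_yKn {m : ℕ} {i : Fin m} {d e : DoVar m →₀ ℕ}
    (he : e ≤ .single (.yKn i) 1)
    (hde : Finsupp.linearCombination ℕ (doExponent m) d =
      Finsupp.linearCombination ℕ (doExponent m) e) :
    d = e ∨ e = .single (.yKn i) 1 ∧ d = .single .x1n 1 + .single (.xKn i) 1 := by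
  classical
  have hd : d.support ⊆ {.x1n, .xKn i, .yKn i} := by
    refine Finsupp.support_subset_of_linearCombination_le
      (fun w hw => by simpa using doExponent_le_yKn hw) ?_
    simpa [hde] using Finsupp.linearCombination_mono (doExponent m) he
  obtain ⟨k, rfl⟩ := Finsupp.support_subset_singleton'.mp
    ((Finsupp.support_mono he).trans Finsupp.support_single_subset)
  have hk : k ≤ 1 := by simpa using he (.yKn i)
  rw [Finsupp.eq_sum_single_of_support_subset hd] at hde ⊢
  simp only [Finset.sum_insert, map_add, Finsupp.linearCombination_single, Finset.mem_insert,
    Finset.mem_singleton, Finset.sum_singleton, reduceCtorEq, or_self, not_false_eq_true] at hde ⊢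
  generalize d .x1n = a, d (.xKn i) = b, d (.yKn i) = c at hde ⊢
  obtain ⟨rfl, rfl, rfl⟩ | ⟨rfl, rfl, rfl, rfl⟩ :
      a = 0 ∧ b = 0 ∧ c = k ∨ k = 1 ∧ a = 1 ∧ b = 1 ∧ c = 0 := by
    have hi : (i : ℕ) < m := i.isLt
    have h1 := congr($hde 1)
    have hn := congr($hde (2 * m + 1))
    have hJ := congr($hde (2 * i + 2))
    simp [doExponent, Finsupp.single_apply] at h1 hn hJ
    split_ifs at h1 hn hJ <;> omega
  all_goals simp

theorem doFiber_below_x1_add_xn {m : ℕ} (hm : 1 ≤ m) {d e : DoVar m →₀ ℕ}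
    (he : e ≤ .single .x1 1 + .single .xn 1)
    (hde : Finsupp.linearCombination ℕ (doExponent m) d =
      Finsupp.linearCombination ℕ (doExponent m) e) :
    d = e ∨ e = .single .x1 1 + .single .xn 1 ∧ d = .single .x1n 4 := by
  classical
  have hd : d.support ⊆ {.x1, .xn, .x1n} := by
    refine Finsupp.support_subset_of_linearCombination_le
      (fun w hw => by simpa using doExponent_le_x1_add_xn hw) ?_
    simpa [hde] using Finsupp.linearCombination_mono (doExponent m) he
  have he' : e.support ⊆ {.x1, .xn} := by
    rw [Finset.insert_eq]
    exact (Finsupp.support_mono he).trans (Finsupp.support_add.trans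
      (Finset.union_subset_union Finsupp.support_single_subset Finsupp.support_single_subset))
  have hp : e .x1 ≤ 1 := by simpa using he .x1
  have hq : e .xn ≤ 1 := by simpa using he .xn
  rw [Finsupp.eq_sum_single_of_support_subset hd, Finsupp.eq_sum_single_of_support_subset he']
    at hde ⊢
  simp only [Finset.sum_insert, map_add, Finsupp.linearCombination_single, Finset.mem_insert,
    Finset.mem_singleton, Finset.sum_singleton, reduceCtorEq, or_self, not_false_eq_true] at hde ⊢
  generalize d .x1 = a, d .xn = b, d .x1n = c, e .x1 = p, e .xn = q at hde hp hq ⊢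
  obtain ⟨rfl, rfl, rfl⟩ | ⟨rfl, rfl, rfl, rfl, rfl⟩ :
      a = p ∧ b = q ∧ c = 0 ∨ p = 1 ∧ q = 1 ∧ a = 0 ∧ b = 0 ∧ c = 4 := by
    have h1 := congr($hde 1)
    have hn := congr($hde (2 * m + 1))
    simp [doExponent, Finsupp.single_apply] at h1 hn
    split_ifs at h1 hn <;> omega
  all_goals simp

theorem isIndispensable_yK1 (K : Type*) [Field K] {m : ℕ} (i : Fin m) :
    IsIndispensable (RingHom.ker (piDo K m)) (X (.yK1 i) - X .x1n * X (.xK1 i)) := by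
  have hi : (i : ℕ) < m := i.isLt
  rw [piDo_eq_aeval]
  simpa only [X, monomial_mul, one_mul] using
    isIndispensable_of_fibers (fun h => by simpa using congr($h .x1n))
      (by ext k; simp [doExponent, Finsupp.single_apply]; split_ifs <;> omega)
      fun _ _ => doFiber_below_yK1

theorem isIndispensable_yKn (K : Type*) [Field K] {m : ℕ} (i : Fin m) :
    IsIndispensable (RingHom.ker (piDo K m)) (X (.yKn i) - X .x1n * X (.xKn i)) := by
  have hi : (i : ℕ) < m := i.isLt
  rw [piDo_eq_aeval]
  simpa only [X, monomial_mul, one_mul] using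
    isIndispensable_of_fibers (fun h => by simpa using congr($h .x1n))
      (by ext k; simp [doExponent, Finsupp.single_apply]; split_ifs <;> omega)
      fun _ _ => doFiber_below_yKn

theorem isIndispensable_x1_mul_xn (K : Type*) [Field K] {m : ℕ} (hm : 1 ≤ m) :
    IsIndispensable (RingHom.ker (piDo K m)) (X .x1 * X .xn - X .x1n ^ 4) := by
  rw [piDo_eq_aeval]
  simpa only [X, monomial_mul, monomial_pow, one_mul, one_pow, Finsupp.smul_single, smul_eq_mul,
    mul_one] using
    isIndispensable_of_fibers (fun h => by simpa using congr($h .x1))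
      (by ext k; simp [doExponent, Finsupp.single_apply])
      fun _ _ => doFiber_below_x1_add_xn hm

/-- the binomials `y_{i,1} − x_{1,n}x_{i,1}`, `y_{i,n} − x_{1,n}x_{i,n}`
(`i ∈ J`) and `x_1 x_n − x_{1,n}⁴` are indispensable binomials of `I_{D_{2m+1}}`: every set
of binomials generating the toric ideal contains each of them or its negative. -/
theorem GDo_indispensable (K : Type*) [Field K] (m : ℕ) (hm : 2 ≤ m)
    (B : Set (MvPolynomial (DoVar m) K))
    (hbin : ∀ b ∈ B, ∃ d e : DoVar m →₀ ℕ, d ≠ e ∧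
      b = monomial d (1 : K) - monomial e (1 : K))
    (hspan : Ideal.span B = RingHom.ker (piDo K m)) :
    (∀ i : Fin m,
        X (DoVar.yK1 i) - X DoVar.x1n * X (DoVar.xK1 i) ∈ B ∨
        X DoVar.x1n * X (DoVar.xK1 i) - X (DoVar.yK1 i) ∈ B) ∧
    (∀ i : Fin m,
        X (DoVar.yKn i) - X DoVar.x1n * X (DoVar.xKn i) ∈ B ∨
        X DoVar.x1n * X (DoVar.xKn i) - X (DoVar.yKn i) ∈ B) ∧
    (X DoVar.x1 * X DoVar.xn - X DoVar.x1n ^ 4 ∈ B ∨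
      X DoVar.x1n ^ 4 - X DoVar.x1 * X DoVar.xn ∈ B) := by
  have hB : IsBinomialGenerating B (RingHom.ker (piDo K m)) := ⟨hbin, hspan⟩
  refine ⟨fun i => ?_, fun i => ?_, ?_⟩
  · simpa only [neg_sub] using isIndispensable_yK1 K i B hB
  · simpa only [neg_sub] using isIndispensable_yKn K i B hB
  · simpa only [neg_sub] using isIndispensable_x1_mul_xn K (by omega) B hB
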